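/- arXiv:2504.18036 — 2 statements merged into one kernel-verified Lean document; each statement's English description precedes it below -/
import Mathlib

section
/- (Receiver-aperture identity used in Theorem 3.1.) Let x, ϑ, φ be real numbers and let 0 < α < π. Then (1/(2(π − α))) ∫_{ϑ+α}^{ϑ+2π−α} exp(i x cos(θ − φ)) dθ = J_0(x) + 2 ∑_{p=1}^∞ i^p J_p(x) cos(p(ϑ + π − φ)) sinc(p(π − α)), where the series converges absolutely. -/
open MeasureTheory Filter

/-- Bessel function of the first kind of integer order `n`, via the integral
representation `J_n(x) = (1/(2π)) ∫_0^{2π} exp(i (x sin θ - n θ)) dθ`. -/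
noncomputable def besselJ (n : ℤ) (x : ℝ) : ℂ :=
  (1 / (2 * Real.pi)) * ∫ θ in (0:ℝ)..(2 * Real.pi),
    Complex.exp (Complex.I * ((x : ℂ) * (Real.sin θ : ℂ) - (n : ℂ) * (θ : ℂ)))

/-- The unnormalized sinc function: `sinc t = sin t / t` for `t ≠ 0`, and `sinc 0 = 1`. -/
noncomputable def rsinc (t : ℝ) : ℝ := if t = 0 then 1 else Real.sin t / t

/-!
The function `u ↦ exp (i x cos u)` is smooth and `2π`-periodic, so two integrations by parts make
its Fourier coefficients `O(1/n²)`: its Fourier series converges absolutely and pointwise.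
Shifting `θ = u + π/2` identifies the coefficients with `i^n J_n(x)` (Jacobi–Anger expansion),
and `cos` being even makes them symmetric in `n`. Integrating termwise over the arc
`[m - L, m + L]`, with `m = ϑ + π - φ` and `L = π - α`, each exponential `e^{inu}` contributes
`2L e^{inm} sinc(nL)`, and pairing `n` with `-n` turns `e^{inm}` into `2 cos(nm)`.
-/

open Complex
open scoped Real

section FourierSeries

variable {a b : ℝ} {f f' f'' : ℝ → ℂ}

theorem fourierCoeffOn_eq_mul_fourierCoeffOn_deriv (hab : a < b) {n : ℤ} (hn : n ≠ 0)
    (hf : ∀ x ∈ Set.uIcc a b, HasDerivAt f (f' x) x) (hf' : IntervalIntegrable f' volume a b)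
    (hfab : f a = f b) :
    fourierCoeffOn hab f n = (b - a) / (2 * π * I * n) * fourierCoeffOn hab f' n := by
  rw [fourierCoeffOn_of_hasDerivAt hab hn hf hf', hfab, sub_self, mul_zero, zero_sub]
  have : (n : ℂ) ≠ 0 := by exact_mod_cast hn
  field_simp

theorem norm_fourierCoeffOn_le (hab : a < b) {C : ℝ} (hf : ∀ x ∈ Set.Ioc a b, ‖f x‖ ≤ C)
    (n : ℤ) : ‖fourierCoeffOn hab f n‖ ≤ C := by
  have hba : 0 < b - a := sub_pos.mpr hab
  rw [fourierCoeffOn_eq_integral, norm_smul]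
  calc ‖1 / (b - a)‖ * ‖∫ x in a..b, fourier (-n) (x : AddCircle (b - a)) • f x‖
      ≤ 1 / (b - a) * (C * |b - a|) := by
        rw [Real.norm_of_nonneg (by positivity)]
        gcongr
        refine intervalIntegral.norm_integral_le_of_norm_le_const fun x hx => ?_
        rw [Set.uIoc_of_le hab.le] at hx
        rw [norm_smul, fourier_apply, Circle.norm_coe, one_mul]
        exact hf x hx
    _ = C := by rw [abs_of_pos hba]; field_simp

theorem summable_norm_fourierCoeffOn_of_hasDerivAt (hab : a < b) {C : ℝ}
    (hf : ∀ x ∈ Set.uIcc a b, HasDerivAt f (f' x) x)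
    (hf' : ∀ x ∈ Set.uIcc a b, HasDerivAt f' (f'' x) x)
    (hf'' : IntervalIntegrable f'' volume a b) (hfab : f a = f b) (hf'ab : f' a = f' b)
    (hC : ∀ x ∈ Set.Ioc a b, ‖f'' x‖ ≤ C) :
    Summable fun n => ‖fourierCoeffOn hab f n‖ := by
  have hf'int : IntervalIntegrable f' volume a b :=
    ContinuousOn.intervalIntegrable fun x hx => (hf' x hx).continuousAt.continuousWithinAt
  set K := ((b - a) / (2 * π)) ^ 2 * C
  have hbound : ∀ n : ℤ, n ≠ 0 → ‖fourierCoeffOn hab f n‖ ≤ K / (n : ℝ) ^ 2 := by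
    intro n hn
    rw [fourierCoeffOn_eq_mul_fourierCoeffOn_deriv hab hn hf hf'int hfab,
      fourierCoeffOn_eq_mul_fourierCoeffOn_deriv hab hn hf' hf'' hf'ab, ← mul_assoc, norm_mul]
    have hfactor : ‖(b - a) / (2 * π * I * n) * ((b - a) / (2 * π * I * n))‖
        = ((b - a) / (2 * π)) ^ 2 / (n : ℝ) ^ 2 := by
      rw [← ofReal_sub, norm_mul, norm_div, norm_mul, norm_mul, norm_mul, norm_real, norm_real,
        norm_I, norm_ofNat, norm_intCast, Real.norm_of_nonneg Real.pi_pos.le,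
        Real.norm_of_nonneg (sub_pos.mpr hab).le, ← sq_abs (n : ℝ)]
      ring
    rw [hfactor, div_mul_eq_mul_div]
    gcongr ?_ / _
    exact mul_le_mul_of_nonneg_left (norm_fourierCoeffOn_le hab hC n) (by positivity)
  have hg : Summable fun n : ℤ => K / (n : ℝ) ^ 2 := by
    simpa [div_eq_mul_inv] using
      ((Real.summable_one_div_int_pow (p := 2)).mpr one_lt_two).mul_left K
  refine Summable.of_norm_bounded_eventually hg ?_
  filter_upwards [eventually_cofinite_ne 0] with n hn
  rw [norm_norm]
  exact hbound n hn

theorem hasSum_fourierCoeffOn_mul_cexp (hab : a < b) (hper : Function.Periodic f (b - a))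
    (hcont : Continuous f) (hsum : Summable (fourierCoeffOn hab f)) (x : ℝ) :
    HasSum (fun n : ℤ => fourierCoeffOn hab f n * cexp (2 * π * I * n * x / (b - a))) (f x) := by
  have : Fact (0 < b - a) := ⟨sub_pos.mpr hab⟩
  let F : C(AddCircle (b - a), ℂ) := ⟨hper.lift, continuous_coinduced_dom.mpr hcont⟩
  have hF : ⇑F = AddCircle.liftIoc (b - a) a f := by
    funext y
    change hper.lift y = f (AddCircle.equivIoc (b - a) a y)
    conv_lhs => rw [← AddCircle.coe_equivIoc (a := a) (y := y)]
    exact hper.lift_coe _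
  have hcoeff : fourierCoeff F = fourierCoeffOn hab f := by
    rw [hF]; rfl
  have := has_pointwise_sum_fourier_series_of_summable (hcoeff ▸ hsum) (x : AddCircle (b - a))
  rw [hcoeff] at this
  simpa only [smul_eq_mul, fourier_coe_apply, F, ContinuousMap.coe_mk, hper.lift_coe,
    ofReal_sub] using this

end FourierSeries

theorem integral_cexp_I_mul_eq_sinc (c m L : ℝ) :
    ∫ u in (m - L)..(m + L), cexp (I * c * u) = 2 * L * cexp (I * c * m) * Real.sinc (c * L) := by
  rcases eq_or_ne c 0 with rfl | hc
  · simp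
    ring
  have hIc : I * c ≠ 0 := mul_ne_zero I_ne_zero (ofReal_ne_zero.mpr hc)
  have hsinc : c * L * Real.sinc (c * L) = Real.sin (c * L) := by
    rcases eq_or_ne (c * L) 0 with h | h
    · simp [h]
    · rw [Real.sinc_of_ne_zero h]
      exact mul_div_cancel₀ _ h
  have hrot (s : ℝ) : cexp (I * c * (m + s : ℝ)) =
      cexp (I * c * m) * (Real.cos (c * s) + Real.sin (c * s) * I) := by
    rw [ofReal_cos, ofReal_sin, ← exp_mul_I, ← exp_add]
    push_cast
    ring_nf
  rw [integral_exp_mul_complex hIc, sub_eq_add_neg m L, hrot, hrot, mul_neg, Real.cos_neg,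
    Real.sin_neg, div_eq_iff hIc]
  have hsincC := congrArg ofReal hsinc
  push_cast at hsincC ⊢
  linear_combination (-2 * I * cexp (I * c * m)) * hsincC

section ArcAverage

variable {a : ℤ → ℂ} {f : ℝ → ℂ}

theorem hasSum_intervalIntegral_of_hasSum_fourier (ha : Summable fun n => ‖a n‖)
    (hf : ∀ u : ℝ, HasSum (fun n : ℤ => a n * cexp (I * n * u)) (f u)) (m L : ℝ) :
    HasSum (fun n : ℤ => a n * (2 * L * cexp (I * n * m) * Real.sinc (n * L)))
      (∫ u in (m - L)..(m + L), f u) := by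
  have h := intervalIntegral.hasSum_integral_of_dominated_convergence (a := m - L) (b := m + L)
    (μ := volume)
    (F := fun (n : ℤ) (u : ℝ) => a n * cexp (I * n * u)) (fun n _ => ‖a n‖)
    (fun n => (by fun_prop : Continuous _).aestronglyMeasurable)
    (fun n => ae_of_all _ fun u _ => by
      rw [norm_mul, mul_assoc, ← ofReal_intCast, ← ofReal_mul, norm_exp_I_mul_ofReal, mul_one])
    (ae_of_all _ fun _ _ => ha) intervalIntegrable_const (ae_of_all _ fun u _ => hf u)
  have hterm (n : ℤ) : ∫ u in (m - L)..(m + L), a n * cexp (I * n * u) =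
      a n * (2 * L * cexp (I * n * m) * Real.sinc (n * L)) := by
    rw [intervalIntegral.integral_const_mul, ← ofReal_intCast, integral_cexp_I_mul_eq_sinc]
  simpa only [hterm] using h

noncomputable def cosSincTerm (a : ℤ → ℂ) (m L : ℝ) (p : ℕ) : ℂ :=
  2 * a (p + 1) * Real.cos ((p + 1) * m) * Real.sinc ((p + 1) * L)

theorem hasSum_cosSincTerm (ha : Summable fun n => ‖a n‖) (heven : ∀ n, a (-n) = a n)
    (hf : ∀ u : ℝ, HasSum (fun n : ℤ => a n * cexp (I * n * u)) (f u)) (m : ℝ) {L : ℝ}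
    (hL : L ≠ 0) :
    HasSum (cosSincTerm a m L) ((∫ u in (m - L)..(m + L), f u) / (2 * L) - a 0) := by
  set t : ℤ → ℂ := fun n => a n * (2 * L * cexp (I * n * m) * Real.sinc (n * L)) with ht
  have hZ : HasSum t (∫ u in (m - L)..(m + L), f u) :=
    hasSum_intervalIntegral_of_hasSum_fourier ha hf m L
  have hpairs : HasSum (fun p : ℕ => t (p + 1 : ℕ) + t (-(p + 1 : ℕ)))
      ((∫ u in (m - L)..(m + L), f u) - t 0) := by
    have h := (hasSum_nat_add_iff' 1).mpr hZ.nat_add_neg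
    rwa [Finset.sum_range_one, Nat.cast_zero, neg_zero, add_sub_add_right_eq_sub] at h
  have hpair (p : ℕ) : t (p + 1 : ℕ) + t (-(p + 1 : ℕ)) = 2 * L * cosSincTerm a m L p := by
    simp only [ht, heven, cosSincTerm, Int.cast_neg, mul_neg, Real.sinc_neg, neg_mul]
    rw [Complex.ofReal_cos, Complex.cos]
    push_cast
    ring_nf
  have hL' : (L : ℂ) ≠ 0 := ofReal_ne_zero.mpr hL
  have hterms :
      (fun p : ℕ => (t (p + 1 : ℕ) + t (-(p + 1 : ℕ))) / (2 * L)) = cosSincTerm a m L := by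
    funext p
    rw [hpair]
    field_simp
  have hvalue : ((∫ u in (m - L)..(m + L), f u) - t 0) / (2 * L) =
      (∫ u in (m - L)..(m + L), f u) / (2 * L) - a 0 := by
    simp only [ht, Int.cast_zero, mul_zero, zero_mul, exp_zero, Real.sinc_zero, ofReal_one]
    field_simp
  simpa only [hterms, hvalue] using hpairs.div_const (2 * L)

theorem norm_cosSincTerm_le (a : ℤ → ℂ) (m L : ℝ) (p : ℕ) :
    ‖cosSincTerm a m L p‖ ≤ 2 * ‖a (p + 1)‖ := by
  rw [cosSincTerm, norm_mul, norm_mul, norm_mul, norm_real, norm_real, Real.norm_eq_abs,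
    Real.norm_eq_abs, norm_ofNat]
  have hcos := Real.abs_cos_le_one ((p + 1) * m)
  have hsinc := Real.abs_sinc_le_one ((p + 1) * L)
  calc 2 * ‖a (p + 1)‖ * |Real.cos ((p + 1) * m)| * |Real.sinc ((p + 1) * L)|
      ≤ 2 * ‖a (p + 1)‖ * 1 * 1 := by gcongr
    _ = 2 * ‖a (p + 1)‖ := by ring

theorem summable_norm_cosSincTerm (ha : Summable fun n => ‖a n‖) (m L : ℝ) :
    Summable fun p => ‖cosSincTerm a m L p‖ :=
  .of_nonneg_of_le (fun _ => norm_nonneg _) (norm_cosSincTerm_le a m L)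
    ((ha.comp_injective ((add_left_injective 1).comp Nat.cast_injective)).mul_left 2)

end ArcAverage

noncomputable def expICos (x u : ℝ) : ℂ := cexp (I * x * Real.cos u)

theorem norm_expICos (x u : ℝ) : ‖expICos x u‖ = 1 := by
  rw [expICos, show I * x * Real.cos u = ((x * Real.cos u : ℝ) : ℂ) * I by push_cast; ring]
  exact norm_exp_ofReal_mul_I _

theorem expICos_periodic (x : ℝ) : Function.Periodic (expICos x) (2 * π) := fun u => by
  simp [expICos, Real.cos_add_two_pi]

theorem continuous_expICos (x : ℝ) : Continuous (expICos x) := by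
  unfold expICos; fun_prop

theorem hasDerivAt_expICos (x u : ℝ) :
    HasDerivAt (expICos x) (-(I * x * Real.sin u) * expICos x u) u := by
  have := (((Real.hasDerivAt_cos u).ofReal_comp).const_mul (I * x)).cexp
  refine this.congr_deriv ?_
  rw [expICos, ofReal_neg]
  ring

theorem hasDerivAt_deriv_expICos (x u : ℝ) :
    HasDerivAt (fun u => -(I * x * Real.sin u) * expICos x u)
      (-(I * x * Real.cos u + x ^ 2 * Real.sin u ^ 2) * expICos x u) u := by
  have := ((((Real.hasDerivAt_sin u).ofReal_comp).const_mul (I * x)).neg).mul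
    (hasDerivAt_expICos x u)
  refine this.congr_deriv ?_
  simp only [Pi.neg_apply]
  linear_combination ((x : ℂ) ^ 2 * (Real.sin u : ℂ) ^ 2 * expICos x u) * I_sq

theorem norm_deriv_deriv_expICos_le (x u : ℝ) :
    ‖-(I * x * Real.cos u + x ^ 2 * Real.sin u ^ 2) * expICos x u‖ ≤ |x| + x ^ 2 := by
  rw [norm_mul, norm_expICos, mul_one, norm_neg]
  refine (norm_add_le _ _).trans (add_le_add ?_ ?_)
  · rw [norm_mul, norm_mul, norm_I, one_mul, norm_real, norm_real, Real.norm_eq_abs,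
      Real.norm_eq_abs]
    exact mul_le_of_le_one_right (abs_nonneg x) (Real.abs_cos_le_one u)
  · rw [norm_mul, norm_pow, norm_pow, norm_real, norm_real, Real.norm_eq_abs, Real.norm_eq_abs,
      sq_abs]
    exact mul_le_of_le_one_right (sq_nonneg x)
      (pow_le_one₀ (abs_nonneg _) (Real.abs_sin_le_one u))

noncomputable def jacobiAngerCoeff (x : ℝ) (n : ℤ) : ℂ :=
  fourierCoeffOn Real.two_pi_pos (expICos x) n

theorem jacobiAngerCoeff_eq_integral (x : ℝ) (n : ℤ) :
    jacobiAngerCoeff x n =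
      1 / (2 * π) * ∫ u in (0 : ℝ)..(2 * π), cexp (I * x * Real.cos u - I * n * u) := by
  rw [jacobiAngerCoeff, fourierCoeffOn_eq_integral, sub_zero, real_smul]
  push_cast
  congr 1
  refine intervalIntegral.integral_congr fun u _ => ?_
  rw [smul_eq_mul, fourier_coe_apply, expICos, ← Complex.exp_add]
  congr 1
  push_cast
  field_simp
  ring

theorem summable_norm_jacobiAngerCoeff (x : ℝ) : Summable fun n => ‖jacobiAngerCoeff x n‖ :=
  summable_norm_fourierCoeffOn_of_hasDerivAt Real.two_pi_pos (fun u _ => hasDerivAt_expICos x u)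
    (fun u _ => hasDerivAt_deriv_expICos x u)
    (Continuous.intervalIntegrable (by have := continuous_expICos x; fun_prop) _ _)
    (by simpa using (expICos_periodic x 0).symm) (by simp)
    fun u _ => norm_deriv_deriv_expICos_le x u

theorem hasSum_jacobiAngerCoeff_mul_cexp (x u : ℝ) :
    HasSum (fun n : ℤ => jacobiAngerCoeff x n * cexp (I * n * u)) (expICos x u) := by
  have h := hasSum_fourierCoeffOn_mul_cexp Real.two_pi_pos
    (by simpa using expICos_periodic x) (continuous_expICos x)
    (summable_norm_jacobiAngerCoeff x).of_norm u
  convert h using 3 with n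
  · rfl
  · rw [ofReal_zero, sub_zero, ofReal_mul, ofReal_ofNat]
    field_simp

theorem jacobiAngerCoeff_natCast (x : ℝ) (n : ℕ) :
    jacobiAngerCoeff x n = I ^ n * besselJ n x := by
  set g : ℝ → ℂ := fun θ => cexp (I * (x * Real.sin θ - (n : ℤ) * θ))
  -- `g` is the integrand of `besselJ n x`; substitute `θ = u + π / 2`, as `cos u = sin θ`.
  have hg : Function.Periodic g (2 * π) := fun θ => by
    simp only [g, Real.sin_add_two_pi]
    rw [exp_eq_exp_iff_exists_int]
    exact ⟨-n, by push_cast; ring⟩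
  have hshift (u : ℝ) :
      cexp (I * x * Real.cos u - I * (n : ℤ) * u) = I ^ n * g (u + π / 2) := by
    rw [show I ^ n = cexp (n * (π / 2 * I)) by rw [exp_nat_mul, exp_pi_div_two_mul_I], ← exp_add,
      Real.sin_add_pi_div_two]
    congr 1
    push_cast
    ring
  rw [jacobiAngerCoeff_eq_integral, besselJ, intervalIntegral.integral_congr fun u _ => hshift u,
    intervalIntegral.integral_const_mul, intervalIntegral.integral_comp_add_right g, zero_add,
    add_comm, hg.intervalIntegral_add_eq (π / 2) 0, zero_add]
  ring

theorem jacobiAngerCoeff_neg (x : ℝ) (n : ℤ) :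
    jacobiAngerCoeff x (-n) = jacobiAngerCoeff x n := by
  have hreflect := intervalIntegral.integral_comp_sub_left (a := 0) (b := 2 * π)
    (fun u : ℝ => cexp (I * x * Real.cos u - I * n * u)) (2 * π)
  rw [sub_self, sub_zero] at hreflect
  rw [jacobiAngerCoeff_eq_integral, jacobiAngerCoeff_eq_integral, ← hreflect]
  congr 1
  refine intervalIntegral.integral_congr fun u _ => ?_
  rw [Real.cos_two_pi_sub, exp_eq_exp_iff_exists_int]
  exact ⟨n, by push_cast; ring⟩

theorem jacobiAngerCoeff_zero (x : ℝ) : jacobiAngerCoeff x 0 = besselJ 0 x := by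
  simpa using jacobiAngerCoeff_natCast x 0

theorem rsinc_eq_sinc : rsinc = Real.sinc := rfl

theorem receiver_aperture_identity_general (x ϑ φ α : ℝ) (hαπ : α < Real.pi) :
    Summable (fun p : ℕ =>
      ‖(2 : ℂ) * Complex.I ^ (p + 1) * besselJ (p + 1) x *
        (Real.cos (((p : ℝ) + 1) * (ϑ + Real.pi - φ)) : ℂ) *
        (rsinc (((p : ℝ) + 1) * (Real.pi - α)) : ℂ)‖) ∧
    (1 / (2 * ((Real.pi : ℂ) - (α : ℂ)))) *
        ∫ θ in (ϑ + α)..(ϑ + 2 * Real.pi - α),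
          Complex.exp (Complex.I * (x : ℂ) * (Real.cos (θ - φ) : ℂ))
      = besselJ 0 x +
        ∑' p : ℕ,
          (2 : ℂ) * Complex.I ^ (p + 1) * besselJ (p + 1) x *
            (Real.cos (((p : ℝ) + 1) * (ϑ + Real.pi - φ)) : ℂ) *
            (rsinc (((p : ℝ) + 1) * (Real.pi - α)) : ℂ) := by
  have hL : π - α ≠ 0 := (sub_pos.mpr hαπ).ne'
  have hterm (p : ℕ) : 2 * I ^ (p + 1) * besselJ (p + 1) x *
        (Real.cos ((p + 1) * (ϑ + π - φ)) : ℂ) * (rsinc ((p + 1) * (π - α)) : ℂ) =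
      cosSincTerm (jacobiAngerCoeff x) (ϑ + π - φ) (π - α) p := by
    have hcoeff := jacobiAngerCoeff_natCast x (p + 1)
    push_cast at hcoeff
    rw [cosSincTerm, hcoeff, ← mul_assoc, rsinc_eq_sinc]
  have harc : ∫ θ in (ϑ + α)..(ϑ + 2 * π - α), cexp (I * x * Real.cos (θ - φ)) =
      ∫ u in (ϑ + π - φ - (π - α))..(ϑ + π - φ + (π - α)), expICos x u := by
    change ∫ θ in (ϑ + α)..(ϑ + 2 * π - α), expICos x (θ - φ) = _
    rw [intervalIntegral.integral_comp_sub_right (expICos x)]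
    congr 1 <;> ring
  simp only [hterm, harc]
  refine ⟨summable_norm_cosSincTerm (summable_norm_jacobiAngerCoeff x) _ _, ?_⟩
  rw [(hasSum_cosSincTerm (summable_norm_jacobiAngerCoeff x) (jacobiAngerCoeff_neg x)
    (hasSum_jacobiAngerCoeff_mul_cexp x) _ hL).tsum_eq, jacobiAngerCoeff_zero]
  push_cast
  ring

/-- Receiver-aperture identity: for real `x`, `ϑ`, `φ` and `0 < α < π`,
`(1/(2(π − α))) ∫_{ϑ+α}^{ϑ+2π−α} exp(i x cos(θ − φ)) dθ
  = J_0(x) + 2 ∑_{p=1}^∞ i^p J_p(x) cos(p(ϑ + π − φ)) sinc(p(π − α))`,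
the series converging absolutely. -/
theorem receiver_aperture_identity (x ϑ φ α : ℝ) (hα0 : 0 < α) (hαπ : α < Real.pi) :
    Summable (fun p : ℕ =>
      ‖(2 : ℂ) * Complex.I ^ (p + 1) * besselJ (p + 1) x *
        (Real.cos (((p : ℝ) + 1) * (ϑ + Real.pi - φ)) : ℂ) *
        (rsinc (((p : ℝ) + 1) * (Real.pi - α)) : ℂ)‖) ∧
    (1 / (2 * ((Real.pi : ℂ) - (α : ℂ)))) *
        ∫ θ in (ϑ + α)..(ϑ + 2 * Real.pi - α),
          Complex.exp (Complex.I * (x : ℂ) * (Real.cos (θ - φ) : ℂ))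
      = besselJ 0 x +
        ∑' p : ℕ,
          (2 : ℂ) * Complex.I ^ (p + 1) * besselJ (p + 1) x *
            (Real.cos (((p : ℝ) + 1) * (ϑ + Real.pi - φ)) : ℂ) *
            (rsinc (((p : ℝ) + 1) * (Real.pi - α)) : ℂ) :=
  receiver_aperture_identity_general x ϑ φ α hαπ
end

section
/- (Weighted product-average lemma; core computation of Theorem 4.1.) Let x, φ be real numbers and let (c_p)_{p≥1} be a bounded sequence of real numbers. Then (1/(2π)) ∫_0^{2π} exp(i x cos(ϑ − φ)) · ( J_0(x) + 2 ∑_{p=1}^∞ c_p i^p J_p(x) cos(p(ϑ − φ)) ) dϑ = J_0(x)² + 2 ∑_{p=1}^∞ (−1)^p c_p J_p(x)², where both series converge absolutely. -/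
/-! Two integrations by parts against `e^{-inθ}` give `|J_n(x)| ≤ (|x| + x²) / n²`, so for a
bounded sequence `c` both series are dominated by `∑ B |J_p(x)|` and the integral may be taken
term by term. Each term is then a Fourier coefficient of `e^{ix cos ψ}`: the substitution
`θ = ψ + π/2` in the defining integral of `J_p`, together with `ψ ↦ -ψ`, gives
`∫₀^{2π} e^{ix cos ψ} cos(pψ) dψ = 2π iᵖ J_p(x)`, and `iᵖ · iᵖ = (-1)ᵖ`. -/

open MeasureTheory Filter

open Complex intervalIntegral
open scoped Real

namespace Function.Periodic

variable {E : Type*} [NormedAddCommGroup E] [NormedSpace ℝ E] {f : ℝ → E} {T : ℝ}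

theorem intervalIntegral_comp_add_right (hf : Periodic f T) (a : ℝ) :
    ∫ x in 0..T, f (x + a) = ∫ x in 0..T, f x := by
  simpa [integral_comp_add_right, add_comm] using hf.intervalIntegral_add_eq a 0

theorem intervalIntegral_comp_sub_right (hf : Periodic f T) (a : ℝ) :
    ∫ x in 0..T, f (x - a) = ∫ x in 0..T, f x := by
  simpa only [sub_eq_add_neg] using hf.intervalIntegral_comp_add_right (-a)

theorem intervalIntegral_comp_neg (hf : Periodic f T) :
    ∫ x in 0..T, f (-x) = ∫ x in 0..T, f x := by
  simpa [integral_comp_neg] using hf.intervalIntegral_add_eq (-T) 0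

end Function.Periodic

theorem intervalIntegral_tsum_of_norm_le {E : Type*} [NormedAddCommGroup E] [NormedSpace ℝ E]
    [CompleteSpace E] {F : ℕ → ℝ → E} {u : ℕ → ℝ} (hF : ∀ n, Continuous (F n))
    (hu : Summable u) (hFu : ∀ n t, ‖F n t‖ ≤ u n) (a b : ℝ) :
    ∫ t in a..b, ∑' n, F n t = ∑' n, ∫ t in a..b, F n t :=
  (hasSum_integral_of_dominated_convergence (fun n _ => u n)
    (fun n => (hF n).aestronglyMeasurable) (fun n => ae_of_all _ fun t _ => hFu n t)
    (ae_of_all _ fun _ _ => hu) intervalIntegrable_const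
    (ae_of_all _ fun t _ => (hu.of_norm_bounded (hFu · t)).hasSum)).tsum_eq.symm

theorem periodic_exp_neg_I_int_mul (n : ℤ) :
    Function.Periodic (fun θ : ℝ => exp (-(I * n * θ))) (2 * π) := by
  intro θ
  have : -(I * n * ((θ + 2 * π : ℝ) : ℂ)) = -(I * n * θ) + (-n : ℤ) * (2 * π * I) := by
    push_cast; ring
  simp only [this, exp_add, exp_int_mul_two_pi_mul_I, mul_one]

theorem norm_exp_I_mul_ofReal_mul_ofReal (a b : ℝ) : ‖exp (I * a * b)‖ = 1 := by
  rw [mul_assoc, ← ofReal_mul, norm_exp_I_mul_ofReal]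

theorem integral_mul_exp_neg_I_mul_eq {u u' : ℝ → ℂ} {n : ℤ} (hn : n ≠ 0)
    (hu : ∀ θ, HasDerivAt u (u' θ) θ) (hu' : Continuous u') (hper : u (2 * π) = u 0) :
    ∫ θ in 0..2 * π, u θ * exp (-(I * n * θ)) =
      (I * n)⁻¹ * ∫ θ in 0..2 * π, u' θ * exp (-(I * n * θ)) := by
  have hn' : (n : ℂ) ≠ 0 := Int.cast_ne_zero.mpr hn
  set v : ℝ → ℂ := fun θ => -(I * n)⁻¹ * exp (-(I * n * θ))
  have hv : ∀ θ : ℝ, HasDerivAt v (exp (-(I * n * θ))) θ := fun θ => by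
    refine ((((hasDerivAt_id θ).ofReal_comp.const_mul (I * n)).neg.cexp).const_mul
      (-(I * n)⁻¹)).congr_deriv ?_
    simp only [id, ofReal_one, mul_one, Pi.neg_apply]
    field_simp
  have hv_per : v (2 * π) = v 0 := by
    simpa [v] using congrArg (-(I * n)⁻¹ * ·) (periodic_exp_neg_I_int_mul n 0)
  rw [integral_mul_deriv_eq_deriv_mul (fun θ _ => hu θ) (fun θ _ => hv θ)
      (hu'.intervalIntegrable _ _) (Continuous.intervalIntegrable (by fun_prop) _ _),
    hper, hv_per, sub_self, zero_sub, ← intervalIntegral.integral_const_mul,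
    ← intervalIntegral.integral_neg]
  congr 1 with θ
  simp only [v]
  ring

theorem norm_integral_mul_exp_neg_I_mul_le {u u' u'' : ℝ → ℂ} {n : ℤ} {M : ℝ}
    (hn : n ≠ 0) (hu : ∀ θ, HasDerivAt u (u' θ) θ) (hu' : ∀ θ, HasDerivAt u' (u'' θ) θ)
    (hu'' : Continuous u'') (hper : u (2 * π) = u 0) (hper' : u' (2 * π) = u' 0)
    (hM : ∀ θ, ‖u'' θ‖ ≤ M) :
    ‖∫ θ in 0..2 * π, u θ * exp (-(I * n * θ))‖ ≤ 2 * π * M / n ^ 2 := by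
  have hu'c : Continuous u' := continuous_iff_continuousAt.mpr fun θ => (hu' θ).continuousAt
  have hbound : ‖∫ θ in 0..2 * π, u'' θ * exp (-(I * n * θ))‖ ≤ M * |2 * π - 0| :=
    norm_integral_le_of_norm_le_const fun θ _ => by
      rw [norm_mul, (by simp [norm_exp, mul_re] : ‖exp (-(I * n * θ))‖ = 1), mul_one]
      exact hM θ
  rw [sub_zero, abs_of_pos Real.two_pi_pos] at hbound
  rw [integral_mul_exp_neg_I_mul_eq hn hu hu'c hper,
    integral_mul_exp_neg_I_mul_eq hn hu' hu'' hper', ← mul_assoc, ← mul_inv, norm_mul, norm_inv,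
    ← sq, norm_pow, norm_mul, norm_I, one_mul, norm_intCast, sq_abs, inv_mul_eq_div,
    mul_comm (2 * π)]
  gcongr

theorem hasDerivAt_exp_I_mul_sin (x θ : ℝ) :
    HasDerivAt (fun θ : ℝ => exp (I * x * Real.sin θ))
      (I * x * Real.cos θ * exp (I * x * Real.sin θ)) θ := by
  simpa [mul_comm] using ((Real.hasDerivAt_sin θ).ofReal_comp.const_mul (I * x)).cexp

theorem hasDerivAt_I_mul_cos_mul_exp_I_mul_sin (x θ : ℝ) :
    HasDerivAt (fun θ : ℝ => I * x * Real.cos θ * exp (I * x * Real.sin θ))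
      ((-(I * x * Real.sin θ) + (I * x * Real.cos θ) ^ 2) * exp (I * x * Real.sin θ)) θ := by
  have hcos := (Real.hasDerivAt_cos θ).ofReal_comp.const_mul (I * x)
  refine (hcos.mul (hasDerivAt_exp_I_mul_sin x θ)).congr_deriv ?_
  push_cast
  ring

theorem besselJ_eq_integral (n : ℤ) (x : ℝ) :
    besselJ n x =
      (2 * (π : ℂ))⁻¹ *
        ∫ θ in 0..2 * π, exp (I * x * Real.sin θ) * exp (-(I * n * θ)) := by
  rw [besselJ, one_div]
  congr 1
  refine integral_congr fun θ _ => ?_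
  rw [← exp_add]
  ring_nf

theorem norm_inv_two_pi : ‖(2 * (π : ℂ))⁻¹‖ = (2 * π)⁻¹ := by
  rw [← ofReal_ofNat, ← ofReal_mul, ← ofReal_inv, norm_real,
    Real.norm_of_nonneg (by positivity)]

theorem norm_besselJ_le_one (n : ℤ) (x : ℝ) : ‖besselJ n x‖ ≤ 1 := by
  have h : ‖∫ θ in 0..2 * π, exp (I * x * Real.sin θ) * exp (-(I * n * θ))‖ ≤
      1 * |2 * π - 0| :=
    norm_integral_le_of_norm_le_const fun θ _ => by simp [norm_exp, mul_re]
  rw [besselJ_eq_integral, norm_mul, norm_inv_two_pi]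
  rw [one_mul, sub_zero, abs_of_pos Real.two_pi_pos] at h
  calc (2 * π)⁻¹ * _ ≤ (2 * π)⁻¹ * (2 * π) := by gcongr
    _ = 1 := inv_mul_cancel₀ Real.two_pi_pos.ne'

theorem norm_besselJ_le (x : ℝ) {n : ℤ} (hn : n ≠ 0) :
    ‖besselJ n x‖ ≤ (|x| + x ^ 2) / n ^ 2 := by
  have hM : ∀ θ : ℝ, ‖(-(I * x * Real.sin θ) + (I * x * Real.cos θ) ^ 2) *
      exp (I * x * Real.sin θ)‖ ≤ |x| + x ^ 2 := fun θ => by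
    rw [norm_mul, norm_exp_I_mul_ofReal_mul_ofReal, mul_one]
    refine (norm_add_le _ _).trans (add_le_add ?_ ?_)
    · simp only [norm_neg, norm_mul, norm_I, norm_real, Real.norm_eq_abs, one_mul]
      exact mul_le_of_le_one_right (abs_nonneg x) (Real.abs_sin_le_one θ)
    · simp only [norm_pow, norm_mul, norm_I, norm_real, Real.norm_eq_abs, one_pow, one_mul,
        mul_pow, sq_abs]
      exact mul_le_of_le_one_right (sq_nonneg x) (Real.cos_sq_le_one θ)
  have h := norm_integral_mul_exp_neg_I_mul_le hn (hasDerivAt_exp_I_mul_sin x)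
    (hasDerivAt_I_mul_cos_mul_exp_I_mul_sin x) (by fun_prop) (by simp) (by simp) hM
  rw [besselJ_eq_integral, norm_mul, norm_inv_two_pi]
  calc (2 * π)⁻¹ * _ ≤ (2 * π)⁻¹ * (2 * π * (|x| + x ^ 2) / n ^ 2) := by gcongr
    _ = _ := by field_simp

theorem summable_norm_besselJ_succ (x : ℝ) : Summable fun p : ℕ => ‖besselJ (p + 1) x‖ := by
  have hsum : Summable fun p : ℕ => (|x| + x ^ 2) / ((p + 1 : ℕ) : ℝ) ^ 2 :=
    ((summable_nat_add_iff 1).mpr (Real.summable_nat_pow_inv.mpr one_lt_two)).mul_left _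
  refine hsum.of_nonneg_of_le (fun _ => norm_nonneg _) fun p => ?_
  simpa using norm_besselJ_le x (n := p + 1) (by omega)

theorem integral_exp_I_mul_cos_mul_exp_neg (x : ℝ) (n : ℕ) :
    ∫ ψ in 0..2 * π, exp (I * x * Real.cos ψ) * exp (-(I * n * ψ)) =
      2 * π * I ^ n * besselJ n x := by
  have hshift : ∀ ψ : ℝ,
      exp (I * x * Real.sin (ψ + π / 2)) * exp (-(I * (n : ℤ) * ↑(ψ + π / 2))) =
        exp (I * x * Real.cos ψ) * exp (-(I * n * ψ)) * (-I) ^ n := by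
    intro ψ
    rw [Real.sin_add_pi_div_two, ← exp_neg_pi_div_two_mul_I, ← exp_nat_mul]
    simp only [← exp_add]
    push_cast
    ring_nf
  have hper := (Real.sin_periodic.comp fun s => exp (I * x * s)).mul (periodic_exp_neg_I_int_mul n)
  have h := hper.intervalIntegral_comp_add_right (π / 2)
  simp only [Function.comp_def, Pi.mul_apply, hshift, intervalIntegral.integral_mul_const] at h
  have hI : I ^ n * (-I) ^ n = 1 := by rw [← mul_pow, mul_neg, I_mul_I, neg_neg, one_pow]
  have hπ : 2 * (π : ℂ) * (2 * (π : ℂ))⁻¹ = 1 :=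
    mul_inv_cancel₀ (mul_ne_zero two_ne_zero (ofReal_ne_zero.mpr Real.pi_ne_zero))
  rw [besselJ_eq_integral, ← h]
  linear_combination (-∫ ψ in 0..2 * π, exp (I * x * Real.cos ψ) * exp (-(I * n * ψ))) *
    (hI + I ^ n * (-I) ^ n * hπ)

theorem integral_exp_I_mul_cos_sub_mul_cos (x φ : ℝ) (n : ℕ) :
    ∫ ϑ in 0..2 * π, exp (I * x * Real.cos (ϑ - φ)) * Real.cos (n * (ϑ - φ)) =
      2 * π * I ^ n * besselJ n x := by
  set g : ℝ → ℂ := fun ψ => exp (I * x * Real.cos ψ) * exp (-(I * (n : ℤ) * ψ))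
  have hg : Function.Periodic g (2 * π) :=
    (Real.cos_periodic.comp fun s => exp (I * x * s)).mul (periodic_exp_neg_I_int_mul n)
  have hcos : ∀ ψ : ℝ,
      exp (I * x * Real.cos ψ) * Real.cos (n * ψ) = (g (-ψ) + g ψ) / 2 := by
    intro ψ
    have h2cos : (Real.cos (n * ψ) : ℂ) = (exp (I * n * ψ) + exp (-(I * n * ψ))) / 2 := by
      rw [ofReal_cos, cos]
      push_cast
      ring_nf
    simp only [g, Real.cos_neg, h2cos]
    push_cast
    ring_nf
  have hper : Function.Periodic (fun ψ : ℝ => exp (I * x * Real.cos ψ) * Real.cos (n * ψ))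
      (2 * π) := by
    intro ψ
    simp only [Real.cos_add_two_pi, mul_add, Real.cos_add_nat_mul_two_pi]
  have hgc : Continuous g := by fun_prop
  refine (hper.intervalIntegral_comp_sub_right φ).trans ?_
  rw [integral_congr fun ψ _ => hcos ψ, intervalIntegral.integral_div,
    intervalIntegral.integral_add ((hgc.comp' continuous_neg).intervalIntegrable _ _)
      (hgc.intervalIntegrable _ _), hg.intervalIntegral_comp_neg]
  simp only [g, Int.cast_natCast]
  rw [integral_exp_I_mul_cos_mul_exp_neg]
  ring

noncomputable def weightedBesselTerm (x : ℝ) (c : ℕ → ℝ) (p : ℕ) (ψ : ℝ) : ℂ :=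
  (c (p + 1) : ℂ) * I ^ (p + 1) * besselJ (p + 1) x * (Real.cos (((p : ℝ) + 1) * ψ) : ℂ)

@[fun_prop]
theorem continuous_weightedBesselTerm (x : ℝ) (c : ℕ → ℝ) (p : ℕ) :
    Continuous (weightedBesselTerm x c p) := by
  unfold weightedBesselTerm
  fun_prop

theorem norm_weightedBesselTerm_le {x : ℝ} {c : ℕ → ℝ} {B : ℝ} (hB : ∀ p, |c p| ≤ B)
    (p : ℕ) (ψ : ℝ) :
    ‖weightedBesselTerm x c p ψ‖ ≤ B * ‖besselJ (p + 1) x‖ := by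
  simp only [weightedBesselTerm, norm_mul, norm_pow, norm_I, one_pow, mul_one, norm_real,
    Real.norm_eq_abs]
  calc |c (p + 1)| * ‖besselJ (p + 1) x‖ * |Real.cos _|
      ≤ |c (p + 1)| * ‖besselJ (p + 1) x‖ :=
        mul_le_of_le_one_right (by positivity) (Real.abs_cos_le_one _)
    _ ≤ B * ‖besselJ (p + 1) x‖ := by gcongr; exact hB _

theorem norm_neg_one_pow_mul_besselJ_sq_le {x : ℝ} {c : ℕ → ℝ} {B : ℝ}
    (hB : ∀ p, |c p| ≤ B) (p : ℕ) :
    ‖(-1 : ℂ) ^ (p + 1) * c (p + 1) * besselJ (p + 1) x ^ 2‖ ≤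
      B * ‖besselJ (p + 1) x‖ := by
  simp only [norm_mul, norm_pow, norm_neg, norm_one, one_pow, one_mul, norm_real,
    Real.norm_eq_abs]
  calc |c (p + 1)| * ‖besselJ (p + 1) x‖ ^ 2
      ≤ |c (p + 1)| * ‖besselJ (p + 1) x‖ := by
        rw [sq]; gcongr; exact mul_le_of_le_one_right (norm_nonneg _) (norm_besselJ_le_one _ _)
    _ ≤ B * ‖besselJ (p + 1) x‖ := by gcongr; exact hB _

theorem integral_exp_I_mul_cos_sub_mul_weightedBesselTerm (x φ : ℝ) (c : ℕ → ℝ) (p : ℕ) :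
    ∫ ϑ in 0..2 * π, exp (I * x * Real.cos (ϑ - φ)) * weightedBesselTerm x c p (ϑ - φ) =
      2 * π * ((-1 : ℂ) ^ (p + 1) * c (p + 1) * besselJ (p + 1) x ^ 2) := by
  have h := integral_exp_I_mul_cos_sub_mul_cos x φ (p + 1)
  simp only [Nat.cast_add, Nat.cast_one] at h
  have hI : I ^ (p + 1) * I ^ (p + 1) = (-1) ^ (p + 1) := by rw [← mul_pow, I_mul_I]
  calc ∫ ϑ in 0..2 * π, exp (I * x * Real.cos (ϑ - φ)) * weightedBesselTerm x c p (ϑ - φ)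
      = (c (p + 1) * I ^ (p + 1) * besselJ (p + 1) x) * ∫ ϑ in 0..2 * π,
          exp (I * x * Real.cos (ϑ - φ)) * Real.cos ((p + 1) * (ϑ - φ)) := by
        rw [← intervalIntegral.integral_const_mul]
        refine integral_congr fun ϑ _ => ?_
        simp only [weightedBesselTerm]
        ring
    _ = _ := by
        rw [h]
        linear_combination 2 * π * c (p + 1) * besselJ (p + 1) x ^ 2 * hI

theorem integral_exp_I_mul_cos_sub_mul_tsum_weightedBesselTerm (x : ℝ) {c : ℕ → ℝ} {B : ℝ}
    (hB : ∀ p, |c p| ≤ B) (φ : ℝ) :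
    ∫ ϑ in 0..2 * π,
        exp (I * x * Real.cos (ϑ - φ)) * ∑' p, weightedBesselTerm x c p (ϑ - φ) =
      2 * π * ∑' p : ℕ, (-1 : ℂ) ^ (p + 1) * c (p + 1) * besselJ (p + 1) x ^ 2 := by
  simp_rw [← tsum_mul_left]
  rw [intervalIntegral_tsum_of_norm_le (fun p => by fun_prop)
    ((summable_norm_besselJ_succ x).mul_left B) (fun p ϑ => ?_)]
  · exact tsum_congr (integral_exp_I_mul_cos_sub_mul_weightedBesselTerm x φ c)
  · rw [norm_mul, norm_exp_I_mul_ofReal_mul_ofReal, one_mul]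
    exact norm_weightedBesselTerm_le hB p _

/-- Weighted product-average lemma: for real `x`, `φ` and a bounded sequence `(c_p)_{p≥1}`
of real numbers,
`(1/(2π)) ∫_0^{2π} exp(i x cos(ϑ − φ)) (J_0(x) + 2 ∑_{p=1}^∞ c_p i^p J_p(x) cos(p(ϑ − φ))) dϑ
  = J_0(x)² + 2 ∑_{p=1}^∞ (−1)^p c_p J_p(x)²`, both series converging absolutely. -/
theorem weighted_product_average (x φ : ℝ) (c : ℕ → ℝ) (hc : ∃ B : ℝ, ∀ p : ℕ, |c p| ≤ B) :
    (∀ ϑ : ℝ,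
      Summable (fun p : ℕ =>
        ‖(c (p + 1) : ℂ) * Complex.I ^ (p + 1) * besselJ (p + 1) x *
          (Real.cos (((p : ℝ) + 1) * (ϑ - φ)) : ℂ)‖)) ∧
    Summable (fun p : ℕ =>
      ‖(-1 : ℂ) ^ (p + 1) * (c (p + 1) : ℂ) * besselJ (p + 1) x ^ 2‖) ∧
    (1 / (2 * (Real.pi : ℂ))) *
        ∫ ϑ in (0:ℝ)..(2 * Real.pi),
          Complex.exp (Complex.I * (x : ℂ) * (Real.cos (ϑ - φ) : ℂ)) *
            (besselJ 0 x +
              2 * ∑' p : ℕ,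
                (c (p + 1) : ℂ) * Complex.I ^ (p + 1) * besselJ (p + 1) x *
                  (Real.cos (((p : ℝ) + 1) * (ϑ - φ)) : ℂ))
      = besselJ 0 x ^ 2 +
        2 * ∑' p : ℕ, (-1 : ℂ) ^ (p + 1) * (c (p + 1) : ℂ) * besselJ (p + 1) x ^ 2 := by
  obtain ⟨B, hB⟩ := hc
  have hJ := (summable_norm_besselJ_succ x).mul_left B
  refine ⟨fun ϑ => hJ.of_nonneg_of_le (fun _ => norm_nonneg _)
      (norm_weightedBesselTerm_le hB · (ϑ - φ)),
    hJ.of_nonneg_of_le (fun _ => norm_nonneg _) (norm_neg_one_pow_mul_besselJ_sq_le hB), ?_⟩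
  have he := integral_exp_I_mul_cos_sub_mul_cos x φ 0
  simp only [CharP.cast_eq_zero, zero_mul, Real.cos_zero, ofReal_one, mul_one, pow_zero] at he
  have hseries := integral_exp_I_mul_cos_sub_mul_tsum_weightedBesselTerm x hB φ
  have hS : Continuous fun ϑ : ℝ => ∑' p, weightedBesselTerm x c p (ϑ - φ) :=
    continuous_tsum (fun p => by fun_prop) hJ fun p ϑ => norm_weightedBesselTerm_le hB p _
  unfold weightedBesselTerm at hseries hS
  simp only [mul_add, mul_left_comm _ (2 : ℂ)]
  rw [intervalIntegral.integral_add (Continuous.intervalIntegrable (by fun_prop) _ _)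
      (Continuous.intervalIntegrable (by fun_prop) _ _), intervalIntegral.integral_const_mul,
    intervalIntegral.integral_mul_const, he, hseries]
  field_simp
end
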